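/- Projected gradient descent solves US problems globally: let 𝒦 ⊆ ℝ^{mN×pN} be a linear subspace with K·G nilpotent for every K ∈ 𝒦, and suppose the problem min_{K ∈ 𝒦} J(K) is uniquely stationary (every stationary point is a global minimizer). Then for any K₀ ∈ 𝒦 there exists a sequence of positive step sizes (η_t)_{t≥0} such that the iterates K_{t+1} = K_t − η_t·Π_𝒦(∇J(K_t)) satisfy K_t ∈ 𝒦 for every t and lim_{t→∞} J(K_t) = inf{J(K) : K ∈ 𝒦}. -/

import Mathlib

open Matrix

noncomputable section

/-- Squared Frobenius norm of a real matrix. -/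
def frobSq {a b : Type*} [Fintype a] [Fintype b] (A : Matrix a b ℝ) : ℝ :=
  ∑ i, ∑ j, (A i j) ^ 2

/-- Squared Euclidean norm of a real vector. -/
def vecSq {a : Type*} [Fintype a] (v : a → ℝ) : ℝ :=
  ∑ i, (v i) ^ 2

/-- The finite-horizon LQG cost `J(K)` of the paper, written in terms of the
square roots `Msq = M^{1/2}`, `Swsq = Σw^{1/2}`, `Rsq = R^{1/2}`, `Svsq = Σv^{1/2}`. -/
def Jcost {nn mm pp : ℕ}
    (P11 : Matrix (Fin nn) (Fin nn) ℝ) (P12 : Matrix (Fin nn) (Fin mm) ℝ)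
    (C : Matrix (Fin pp) (Fin nn) ℝ)
    (Msq Swsq : Matrix (Fin nn) (Fin nn) ℝ)
    (Rsq : Matrix (Fin mm) (Fin mm) ℝ) (Svsq : Matrix (Fin pp) (Fin pp) ℝ)
    (μ : Fin nn → ℝ) (K : Matrix (Fin mm) (Fin pp) ℝ) : ℝ :=
  frobSq (Msq * (1 - P12 * K * C)⁻¹ * P11 * Swsq)
  + frobSq (Msq * P12 * K * (1 - C * P12 * K)⁻¹ * Svsq)
  + frobSq (Rsq * K * (1 - C * P12 * K)⁻¹ * C * P11 * Swsq)
  + frobSq (Rsq * K * (1 - C * P12 * K)⁻¹ * Svsq)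
  + vecSq ((Msq * (1 - P12 * K * C)⁻¹ * P11).mulVec μ)
  + vecSq ((Rsq * K * (1 - C * P12 * K)⁻¹ * C * P11).mulVec μ)

/-- The disturbance-feedback cost `J̃(Q)` of the paper, written in terms of the
square roots `Msq = M^{1/2}`, `Swsq = Σw^{1/2}`, `Rsq = R^{1/2}`, `Svsq = Σv^{1/2}`. -/
def Jtilde {nn mm pp : ℕ}
    (P11 : Matrix (Fin nn) (Fin nn) ℝ) (P12 : Matrix (Fin nn) (Fin mm) ℝ)
    (C : Matrix (Fin pp) (Fin nn) ℝ)
    (Msq Swsq : Matrix (Fin nn) (Fin nn) ℝ)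
    (Rsq : Matrix (Fin mm) (Fin mm) ℝ) (Svsq : Matrix (Fin pp) (Fin pp) ℝ)
    (μ : Fin nn → ℝ) (Q : Matrix (Fin mm) (Fin pp) ℝ) : ℝ :=
  frobSq (Msq * (1 + P12 * Q * C) * P11 * Swsq)
  + frobSq (Msq * P12 * Q * Svsq)
  + frobSq (Rsq * Q * C * P11 * Swsq)
  + frobSq (Rsq * Q * Svsq)
  + vecSq ((Rsq * Q * C * P11).mulVec μ)
  + vecSq ((Msq * (1 + P12 * Q * C) * P11).mulVec μ)

end

noncomputable section

open scoped ComplexOrder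

/-- The square root of a positive semidefinite matrix, as `Matrix.PosSemidef.sqrt` was defined
in Mathlib (December 2024); it has since been removed from Mathlib. -/
def Matrix.PosSemidef.sqrt {n : Type*} [Fintype n] [DecidableEq n] {𝕜 : Type*} [RCLike 𝕜]
    {A : Matrix n n 𝕜} (hA : A.PosSemidef) : Matrix n n 𝕜 :=
  (hA.1.eigenvectorUnitary : Matrix n n 𝕜) *
    diagonal (((↑) : ℝ → 𝕜) ∘ (√·) ∘ hA.1.eigenvalues) *
    (star hA.1.eigenvectorUnitary : Matrix n n 𝕜)

end

noncomputable section

/-- The gradient `∇J(K)` of the LQG cost with respect to the Frobenius inner product: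
the matrix of partial derivatives `∂J/∂K_{ij}`. -/
def gradJ {nn mm pp : ℕ}
    (P11 : Matrix (Fin nn) (Fin nn) ℝ) (P12 : Matrix (Fin nn) (Fin mm) ℝ)
    (C : Matrix (Fin pp) (Fin nn) ℝ)
    (Msq Swsq : Matrix (Fin nn) (Fin nn) ℝ)
    (Rsq : Matrix (Fin mm) (Fin mm) ℝ) (Svsq : Matrix (Fin pp) (Fin pp) ℝ)
    (μ : Fin nn → ℝ) (K : Matrix (Fin mm) (Fin pp) ℝ) : Matrix (Fin mm) (Fin pp) ℝ :=
  Matrix.of fun i j =>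
    deriv (fun t : ℝ =>
      Jcost P11 P12 C Msq Swsq Rsq Svsq μ (K + t • Matrix.single i j (1 : ℝ))) 0

end

/-! Exact line search along the projected gradient `d = Π_𝒦 ∇J` never increases `J`, so the
iterates stay in the sublevel set `{K ∈ 𝒦 | J K ≤ J K₀}`. That set is compact: the term
`‖R^{1/2} Q Σv^{1/2}‖²` of `J` bounds `Q = K (1 - G K)⁻¹`, and `K` is a polynomial function of `Q`
because `Q G` is nilpotent. A cluster point `K̄` of the iterates is stationary: otherwise a fixed
step from `K̄` would take `J` strictly below the limit of `J(K_t)`, and by continuity of `d` so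
would the same step from iterates close to `K̄`, whereas exact line search makes each such step at
least the next value `J(K_{t+1})`. Unique stationarity then makes `J(K̄)` the infimum. -/

namespace Matrix

variable {R : Type*} {m n : Type*} [Fintype m] [Fintype n]

theorem mul_pow_succ_eq_mul_pow_mul [Semiring R] [DecidableEq m] [DecidableEq n]
    (A : Matrix m n R) (B : Matrix n m R) (k : ℕ) : (B * A) ^ (k + 1) = B * (A * B) ^ k * A := by
  induction k with
  | zero => simp
  | succ k ih => rw [pow_succ, ih, pow_succ]; simp only [Matrix.mul_assoc]

theorem _root_.IsNilpotent.matrix_mul_comm [Semiring R] [DecidableEq m] [DecidableEq n]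
    {A : Matrix m n R} {B : Matrix n m R} (h : IsNilpotent (A * B)) : IsNilpotent (B * A) := by
  obtain ⟨k, hk⟩ := h
  exact ⟨k + 1, by rw [mul_pow_succ_eq_mul_pow_mul, hk, Matrix.mul_zero, Matrix.zero_mul]⟩

variable [CommRing R]

theorem pow_card_eq_zero_of_isNilpotent [IsDomain R] [DecidableEq n] {N : Matrix n n R}
    (hN : IsNilpotent N) : N ^ Fintype.card n = 0 := by
  have hchar : N.charpoly = Polynomial.X ^ Fintype.card n :=
    sub_eq_zero.mp (isNilpotent_charpoly_sub_pow_of_isNilpotent hN).eq_zero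
  simpa [hchar] using N.aeval_self_charpoly

theorem det_one_sub_ne_zero [Nontrivial R] [DecidableEq n] {N : Matrix n n R}
    (hN : IsNilpotent N) : (1 - N).det ≠ 0 :=
  ((isUnit_iff_isUnit_det _).mp hN.isUnit_one_sub).ne_zero

theorem commute_inv_one_sub [DecidableEq n] (N : Matrix n n R) : Commute N (1 - N)⁻¹ := by
  rw [nonsing_inv_eq_ringInverse]
  by_cases h : IsUnit (1 - N)
  · rw [← h.unit_spec, Ring.inverse_unit]
    exact Commute.units_inv_right ((Commute.one_right N).sub_right (Commute.refl N))
  · rw [Ring.inverse_non_unit _ h]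
    exact Commute.zero_right N

/-- `(1 + Q G)⁻¹ Q` with the inverse expanded as a geometric series, which terminates when `Q G` is
nilpotent; unlike the inverse, it is continuous in `Q`. -/
def feedbackOfQ [DecidableEq m] (G : Matrix n m R) (Q : Matrix m n R) : Matrix m n R :=
  (∑ i ∈ Finset.range (Fintype.card m), (-(Q * G)) ^ i) * Q

theorem continuous_feedbackOfQ [TopologicalSpace R] [IsTopologicalRing R] [DecidableEq m]
    (G : Matrix n m R) : Continuous (feedbackOfQ G) := by
  unfold feedbackOfQ
  fun_prop

theorem feedbackOfQ_mul_inv_one_sub [IsDomain R] [DecidableEq m] [DecidableEq n]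
    {G : Matrix n m R} {F : Matrix m n R} (hFG : IsNilpotent (F * G)) :
    feedbackOfQ G (F * (1 - G * F)⁻¹) = F := by
  set Q := F * (1 - G * F)⁻¹
  have hGF : IsNilpotent (G * F) := hFG.matrix_mul_comm
  have hQ : Q * (1 - G * F) = F := by
    rw [Matrix.mul_assoc, nonsing_inv_mul _ ((isUnit_iff_isUnit_det _).mp hGF.isUnit_one_sub),
      Matrix.mul_one]
  have hQF : (1 + Q * G) * F = Q :=
    calc (1 + Q * G) * F = Q * (1 - G * F) + Q * (G * F) := by
          rw [hQ, Matrix.add_mul, Matrix.one_mul, Matrix.mul_assoc]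
      _ = Q := by rw [← Matrix.mul_add, sub_add_cancel, Matrix.mul_one]
  have hQG : IsNilpotent (Q * G) := by
    have : IsNilpotent ((1 - G * F)⁻¹ * G * F) := by
      rw [Matrix.mul_assoc]
      exact (commute_inv_one_sub (G * F)).symm.isNilpotent_mul_left hGF
    simpa only [Q, Matrix.mul_assoc] using this.matrix_mul_comm
  have hpow : (-(Q * G)) ^ Fintype.card m = 0 := pow_card_eq_zero_of_isNilpotent hQG.neg
  calc feedbackOfQ G Q
      = ((∑ i ∈ Finset.range (Fintype.card m), (-(Q * G)) ^ i) * (1 - -(Q * G))) * F := by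
        rw [sub_neg_eq_add, Matrix.mul_assoc, hQF]; rfl
    _ = F := by rw [geom_sum_mul_neg, hpow, sub_zero, Matrix.one_mul]

end Matrix

section MatrixCalculus

attribute [local instance] Matrix.normedAddCommGroup Matrix.normedSpace

variable {𝕜 X : Type*} [NontriviallyNormedField 𝕜] [NormedAddCommGroup X] [NormedSpace 𝕜 X]
  {l m n : Type*} [Fintype l] [Fintype m] [Fintype n] {k : WithTop ℕ∞} {x : X}

theorem contDiffAt_matrix_iff {f : X → Matrix m n 𝕜} :
    ContDiffAt 𝕜 k f x ↔ ∀ i j, ContDiffAt 𝕜 k (fun y => f y i j) x :=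
  contDiffAt_pi.trans (forall_congr' fun _ => contDiffAt_pi)

@[fun_prop]
theorem ContDiffAt.matrix_mul {f : X → Matrix l m 𝕜} {g : X → Matrix m n 𝕜}
    (hf : ContDiffAt 𝕜 k f x) (hg : ContDiffAt 𝕜 k g x) :
    ContDiffAt 𝕜 k (fun y => f y * g y) x :=
  contDiffAt_matrix_iff.2 fun i j => ContDiffAt.sum fun r _ =>
    (contDiffAt_matrix_iff.1 hf i r).mul (contDiffAt_matrix_iff.1 hg r j)

@[fun_prop]
theorem ContDiffAt.matrix_mulVec {f : X → Matrix m n 𝕜} (hf : ContDiffAt 𝕜 k f x) (v : n → 𝕜) :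
    ContDiffAt 𝕜 k (fun y => f y *ᵥ v) x :=
  contDiffAt_pi.2 fun i => ContDiffAt.sum fun j _ =>
    (contDiffAt_matrix_iff.1 hf i j).mul contDiffAt_const

variable [DecidableEq n]

theorem ContDiffAt.matrix_det {f : X → Matrix n n 𝕜} (hf : ContDiffAt 𝕜 k f x) :
    ContDiffAt 𝕜 k (fun y => (f y).det) x := by
  simp only [Matrix.det_apply]
  exact ContDiffAt.sum fun σ _ => (contDiffAt_prod fun i _ =>
    contDiffAt_matrix_iff.1 hf (σ i) i).const_smul _

theorem ContDiffAt.matrix_updateRow {f : X → Matrix n m 𝕜} (hf : ContDiffAt 𝕜 k f x) (i : n)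
    (r : m → 𝕜) : ContDiffAt 𝕜 k (fun y => (f y).updateRow i r) x := by
  refine contDiffAt_matrix_iff.2 fun i' j => ?_
  rcases eq_or_ne i' i with rfl | h
  · simpa using contDiffAt_const
  · simpa [Matrix.updateRow_ne h] using contDiffAt_matrix_iff.1 hf i' j

theorem ContDiffAt.matrix_adjugate {f : X → Matrix n n 𝕜} (hf : ContDiffAt 𝕜 k f x) :
    ContDiffAt 𝕜 k (fun y => (f y).adjugate) x :=
  contDiffAt_matrix_iff.2 fun i j => by
    simpa only [Matrix.adjugate_apply] using (hf.matrix_updateRow j (Pi.single i 1)).matrix_det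

@[fun_prop]
theorem ContDiffAt.matrix_inv {f : X → Matrix n n 𝕜} (hf : ContDiffAt 𝕜 k f x)
    (hdet : (f x).det ≠ 0) : ContDiffAt 𝕜 k (fun y => (f y)⁻¹) x := by
  simp only [Matrix.inv_def, Ring.inverse_eq_inv']
  exact (hf.matrix_det.inv hdet).smul hf.matrix_adjugate

end MatrixCalculus

open Filter Topology Set

section ExactLineSearch

variable {E : Type*} [NormedAddCommGroup E] [NormedSpace ℝ E] {f : E → ℝ} {d : E → E}
  {𝒦 : Submodule ℝ E}

theorem exists_sub_smul_lt_of_fderiv_pos {x v : E} (hf : DifferentiableAt ℝ f x)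
    (hv : 0 < fderiv ℝ f x v) : ∃ s ∈ Ioc (0 : ℝ) 1, f (x - s • v) < f x := by
  have hline : HasDerivAt (fun s : ℝ => f (x - s • v)) (-fderiv ℝ f x v) 0 := by
    have := ((hasDerivAt_id (0 : ℝ)).smul_const v).const_sub x
    exact (hf.hasFDerivAt.comp_hasDerivAt_of_eq 0 this (by simp)).congr_deriv (by simp)
  obtain ⟨s, hslope, hs⟩ := ((hline.tendsto_slope_zero_right.eventually
    (gt_mem_nhds (neg_neg_of_pos hv))).and (Ioc_mem_nhdsGT zero_lt_one)).exists
  refine ⟨s, hs, ?_⟩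
  simp only [zero_add, zero_smul, sub_zero, smul_eq_mul] at hslope
  exact sub_neg.mp (neg_of_mul_neg_right hslope (inv_nonneg.mpr hs.1.le))

theorem exists_pos_isMinOn_Icc {φ : ℝ → ℝ} (hφ : ContinuousOn φ (Icc 0 1))
    (hdesc : ∃ s ∈ Icc (0 : ℝ) 1, φ s < φ 0) : ∃ η ∈ Ioc (0 : ℝ) 1, IsMinOn φ (Icc 0 1) η := by
  obtain ⟨η, hη, hmin⟩ := isCompact_Icc.exists_isMinOn (nonempty_Icc.2 zero_le_one) hφ
  obtain ⟨s, hs, hlt⟩ := hdesc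
  refine ⟨η, ⟨hη.1.lt_of_ne ?_, hη.2⟩, hmin⟩
  rintro rfl
  exact (hmin hs).not_gt hlt

theorem exists_exactLineSearch_step (hf : ∀ x ∈ 𝒦, ContinuousAt f x) (hdmem : ∀ x ∈ 𝒦, d x ∈ 𝒦)
    (hdesc : ∀ x ∈ 𝒦, d x ≠ 0 → ∃ s ∈ Ioc (0 : ℝ) 1, f (x - s • d x) < f x) :
    ∃ η : E → ℝ, (∀ x, 0 < η x) ∧
      ∀ x ∈ 𝒦, IsMinOn (fun s : ℝ => f (x - s • d x)) (Icc 0 1) (η x) := by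
  have : ∀ x, ∃ η : ℝ, 0 < η ∧
      (x ∈ 𝒦 → IsMinOn (fun s : ℝ => f (x - s • d x)) (Icc 0 1) η) := by
    intro x
    by_cases hx : x ∈ 𝒦
    · by_cases hdx : d x = 0
      · exact ⟨1, one_pos, fun _ _ _ => by simp [hdx]⟩
      have hcont : ContinuousOn (fun s : ℝ => f (x - s • d x)) (Icc 0 1) := fun s _ =>
        ((hf _ (𝒦.sub_mem hx (𝒦.smul_mem s (hdmem x hx)))).comp
          (f := fun s : ℝ => x - s • d x) (by fun_prop)).continuousWithinAt
      obtain ⟨s, hs, hlt⟩ := hdesc x hx hdx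
      obtain ⟨η, hη, hmin⟩ :=
        exists_pos_isMinOn_Icc hcont ⟨s, Ioc_subset_Icc_self hs, by simpa using hlt⟩
      exact ⟨η, hη.1, fun _ => hmin⟩
    · exact ⟨1, one_pos, fun h => absurd h hx⟩
  choose η hpos hmin using this
  exact ⟨η, hpos, hmin⟩

theorem descent_iterate_mem {η : ℕ → ℝ} {x : ℕ → E} (hdmem : ∀ y ∈ 𝒦, d y ∈ 𝒦) (hx0 : x 0 ∈ 𝒦)
    (hx : ∀ t, x (t + 1) = x t - η t • d (x t)) (t : ℕ) : x t ∈ 𝒦 := by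
  induction t with
  | zero => exact hx0
  | succ t ih => rw [hx]; exact 𝒦.sub_mem ih (𝒦.smul_mem _ (hdmem _ ih))

theorem exists_stationary_tendsto_of_exactLineSearch {η : ℕ → ℝ} {x : ℕ → E}
    (hf : ∀ y ∈ 𝒦, ContinuousAt f y) (hd : ∀ y ∈ 𝒦, ContinuousAt d y)
    (hdmem : ∀ y ∈ 𝒦, d y ∈ 𝒦)
    (hdesc : ∀ y ∈ 𝒦, d y ≠ 0 → ∃ s ∈ Ioc (0 : ℝ) 1, f (y - s • d y) < f y)
    (hcpt : IsCompact {y | y ∈ 𝒦 ∧ f y ≤ f (x 0)}) (hx0 : x 0 ∈ 𝒦)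
    (hx : ∀ t, x (t + 1) = x t - η t • d (x t))
    (hη : ∀ t, IsMinOn (fun s : ℝ => f (x t - s • d (x t))) (Icc 0 1) (η t)) :
    ∃ y ∈ 𝒦, d y = 0 ∧ Tendsto (fun t => f (x t)) atTop (𝓝 (f y)) := by
  have hmem := descent_iterate_mem hdmem hx0 hx
  have hle : ∀ t, ∀ s ∈ Icc (0 : ℝ) 1, f (x (t + 1)) ≤ f (x t - s • d (x t)) := fun t s hs => by
    rw [hx]
    exact hη t hs
  have hanti : Antitone fun t => f (x t) := antitone_nat_of_succ_le fun t => by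
    simpa using hle t 0 (left_mem_Icc.2 zero_le_one)
  obtain ⟨y, ⟨hy, -⟩, φ, hφ, hxφ⟩ :=
    hcpt.tendsto_subseq fun t => ⟨hmem t, hanti (Nat.zero_le t)⟩
  have hlim : Tendsto (fun t => f (x t)) atTop (𝓝 (f y)) :=
    (tendsto_iff_tendsto_subseq_of_antitone hanti hφ.tendsto_atTop).2
      ((hf y hy).tendsto.comp hxφ)
  refine ⟨y, hy, ?_, hlim⟩
  by_contra hdy
  obtain ⟨s, hs, hlt⟩ := hdesc y hy hdy
  have hstep : ContinuousAt (fun z => f (z - s • d z)) y :=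
    (hf _ (𝒦.sub_mem hy (𝒦.smul_mem s (hdmem y hy)))).comp (f := fun z => z - s • d z)
      (continuousAt_id.sub ((hd y hy).const_smul s))
  have : f y ≤ f (y - s • d y) := ge_of_tendsto (hstep.tendsto.comp hxφ) <|
    Eventually.of_forall fun t =>
      (hanti.le_of_tendsto hlim _).trans (hle _ s (Ioc_subset_Icc_self hs))
  exact hlt.not_ge this

theorem exists_steps_tendsto_sInf_of_uniquelyStationary {x₀ : E}
    (hf : ∀ y ∈ 𝒦, ContinuousAt f y) (hd : ∀ y ∈ 𝒦, ContinuousAt d y)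
    (hdmem : ∀ y ∈ 𝒦, d y ∈ 𝒦)
    (hdesc : ∀ y ∈ 𝒦, d y ≠ 0 → ∃ s ∈ Ioc (0 : ℝ) 1, f (y - s • d y) < f y)
    (hcpt : IsCompact {y | y ∈ 𝒦 ∧ f y ≤ f x₀})
    (hUS : ∀ y ∈ 𝒦, d y = 0 → ∀ z ∈ 𝒦, f y ≤ f z) (hx₀ : x₀ ∈ 𝒦) :
    ∃ η : ℕ → ℝ, (∀ t, 0 < η t) ∧ ∀ x : ℕ → E, x 0 = x₀ →
      (∀ t, x (t + 1) = x t - η t • d (x t)) →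
      (∀ t, x t ∈ 𝒦) ∧ Tendsto (fun t => f (x t)) atTop (𝓝 (sInf (f '' 𝒦))) := by
  obtain ⟨step, hpos, hmin⟩ := exists_exactLineSearch_step hf hdmem hdesc
  let x : ℕ → E := fun t => Nat.rec x₀ (fun _ y => y - step y • d y) t
  refine ⟨fun t => step (x t), fun t => hpos _, fun x' hx'0 hx' => ?_⟩
  obtain rfl : x' = x := funext fun t => by
    induction t with
    | zero => exact hx'0
    | succ t ih => rw [hx', ih]
  have hmem := descent_iterate_mem hdmem (hx'0 ▸ hx₀) hx'
  obtain ⟨y, hy, hdy, hlim⟩ := exists_stationary_tendsto_of_exactLineSearch hf hd hdmem hdesc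
    (hx'0 ▸ hcpt) (hmem 0) hx' fun t => hmin _ (hmem t)
  have hleast : IsLeast (f '' 𝒦) (f y) :=
    ⟨mem_image_of_mem f hy, forall_mem_image.2 (hUS y hy hdy)⟩
  exact ⟨hmem, hleast.csInf_eq ▸ hlim⟩

end ExactLineSearch

section Frobenius

attribute [local instance] Matrix.normedAddCommGroup Matrix.normedSpace

variable {m n : Type*} [Fintype m] [Fintype n] {A P X : Matrix m n ℝ}

theorem frobSq_nonneg (A : Matrix m n ℝ) : 0 ≤ frobSq A :=
  Finset.sum_nonneg fun _ _ => Finset.sum_nonneg fun _ _ => sq_nonneg _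

theorem vecSq_nonneg (v : n → ℝ) : 0 ≤ vecSq v :=
  Finset.sum_nonneg fun _ _ => sq_nonneg _

theorem sq_le_frobSq (A : Matrix m n ℝ) (i : m) (j : n) : A i j ^ 2 ≤ frobSq A :=
  calc A i j ^ 2 ≤ ∑ j', A i j' ^ 2 :=
        Finset.single_le_sum (fun _ _ => sq_nonneg _) (Finset.mem_univ j)
    _ ≤ frobSq A := Finset.single_le_sum (f := fun i => ∑ j', A i j' ^ 2)
        (fun _ _ => Finset.sum_nonneg fun _ _ => sq_nonneg _) (Finset.mem_univ i)

theorem frobSq_pos (hA : A ≠ 0) : 0 < frobSq A := by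
  obtain ⟨i, j, hij⟩ : ∃ i j, A i j ≠ 0 := by
    by_contra! h
    exact hA (ext h)
  exact (by positivity : 0 < A i j ^ 2).trans_le (sq_le_frobSq A i j)

theorem norm_le_sqrt_of_frobSq_le {c : ℝ} (h : frobSq A ≤ c) : ‖A‖ ≤ √c :=
  (norm_le_iff (Real.sqrt_nonneg c)).2 fun i j => by
    simpa [Real.sqrt_sq_eq_abs] using Real.sqrt_le_sqrt ((sq_le_frobSq A i j).trans h)

theorem sum_mul_eq_frobSq_of_orthogonal (horth : ∑ i, ∑ j, (X - P) i j * P i j = 0) :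
    ∑ i, ∑ j, P i j * X i j = frobSq P := by
  rw [← sub_eq_zero, ← horth, frobSq, ← Finset.sum_sub_distrib]
  refine Finset.sum_congr rfl fun i _ => ?_
  rw [← Finset.sum_sub_distrib]
  exact Finset.sum_congr rfl fun j _ => by rw [Matrix.sub_apply]; ring

variable {Y : Type*} [NormedAddCommGroup Y] [NormedSpace ℝ Y] {k : WithTop ℕ∞} {y : Y}

@[fun_prop]
theorem ContDiffAt.frobSq {f : Y → Matrix m n ℝ} (hf : ContDiffAt ℝ k f y) :
    ContDiffAt ℝ k (fun z => _root_.frobSq (f z)) y :=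
  ContDiffAt.sum fun i _ => ContDiffAt.sum fun j _ => (contDiffAt_matrix_iff.1 hf i j).pow 2

@[fun_prop]
theorem ContDiffAt.vecSq {v : Y → n → ℝ} (hv : ContDiffAt ℝ k v y) :
    ContDiffAt ℝ k (fun z => _root_.vecSq (v z)) y :=
  ContDiffAt.sum fun i _ => (contDiffAt_pi.1 hv i).pow 2

end Frobenius

section ProjectedGradient

attribute [local instance] Matrix.normedAddCommGroup Matrix.normedSpace

variable {m n : Type*} [Fintype m] [Fintype n] [DecidableEq m] [DecidableEq n]
  {f : Matrix m n ℝ → ℝ} {K K₀ : Matrix m n ℝ} {𝒦 : Submodule ℝ (Matrix m n ℝ)}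

/-- `gradJ P11 P12 C Msq Swsq Rsq Svsq μ` unfolds to
`matrixGrad (Jcost P11 P12 C Msq Swsq Rsq Svsq μ)`. -/
noncomputable def matrixGrad (f : Matrix m n ℝ → ℝ) (K : Matrix m n ℝ) : Matrix m n ℝ :=
  of fun i j => lineDeriv ℝ f K (single i j 1)

theorem fderiv_apply_eq_sum_mul_matrixGrad (hf : DifferentiableAt ℝ f K) (D : Matrix m n ℝ) :
    fderiv ℝ f K D = ∑ i, ∑ j, D i j * matrixGrad f K i j := by
  conv_lhs => rw [matrix_eq_sum_single D]
  simp only [map_sum]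
  refine Finset.sum_congr rfl fun i _ => Finset.sum_congr rfl fun j _ => ?_
  have hsingle : single i j (D i j) = D i j • single i j (1 : ℝ) := by
    rw [smul_single, smul_eq_mul, mul_one]
  rw [hsingle, map_smul, smul_eq_mul]
  exact congrArg (D i j * ·) hf.lineDeriv_eq_fderiv.symm

theorem continuousAt_matrixGrad (hf : ContDiffAt ℝ 1 f K) : ContinuousAt (matrixGrad f) K := by
  have hdiff : ∀ᶠ K' in 𝓝 K, DifferentiableAt ℝ f K' :=
    (hf.eventually (by simp)).mono fun K' h => h.differentiableAt one_ne_zero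
  have hgrad : (fun K' => of fun i j => fderiv ℝ f K' (single i j 1)) =ᶠ[𝓝 K] matrixGrad f :=
    hdiff.mono fun K' h => by ext i j; exact h.lineDeriv_eq_fderiv.symm
  have hfderiv := (hf.fderiv_right (m := 0) le_rfl).continuousAt
  exact ContinuousAt.congr (continuousAt_pi.2 fun i => continuousAt_pi.2 fun j =>
    hfderiv.clm_apply continuousAt_const) hgrad

theorem exists_projGrad_steps_tendsto_sInf (proj : Matrix m n ℝ →ₗ[ℝ] Matrix m n ℝ)
    (hprojmem : ∀ X, proj X ∈ 𝒦)
    (hprojorth : ∀ X, ∀ D ∈ 𝒦, ∑ i, ∑ j, (X - proj X) i j * D i j = 0)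
    (hf : ∀ K ∈ 𝒦, ContDiffAt ℝ 1 f K) (hcpt : IsCompact {K | K ∈ 𝒦 ∧ f K ≤ f K₀})
    (hUS : ∀ K ∈ 𝒦, proj (matrixGrad f K) = 0 → ∀ K' ∈ 𝒦, f K ≤ f K') (hK₀ : K₀ ∈ 𝒦) :
    ∃ η : ℕ → ℝ, (∀ t, 0 < η t) ∧ ∀ Kseq : ℕ → Matrix m n ℝ, Kseq 0 = K₀ →
      (∀ t, Kseq (t + 1) = Kseq t - η t • proj (matrixGrad f (Kseq t))) →
      (∀ t, Kseq t ∈ 𝒦) ∧ Tendsto (fun t => f (Kseq t)) atTop (𝓝 (sInf (f '' 𝒦))) := by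
  refine exists_steps_tendsto_sInf_of_uniquelyStationary (d := fun K => proj (matrixGrad f K))
    (fun K hK => (hf K hK).continuousAt)
    (fun K hK => proj.continuous_of_finiteDimensional.continuousAt.comp
      (continuousAt_matrixGrad (hf K hK)))
    (fun K _ => hprojmem _) (fun K hK hne => ?_) hcpt hUS hK₀
  have hdiff := (hf K hK).differentiableAt one_ne_zero
  refine exists_sub_smul_lt_of_fderiv_pos hdiff ?_
  have hslope := fderiv_apply_eq_sum_mul_matrixGrad hdiff (proj (matrixGrad f K))
  rw [sum_mul_eq_frobSq_of_orthogonal (hprojorth _ _ (hprojmem _))] at hslope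
  exact (frobSq_pos hne).trans_eq hslope.symm

end ProjectedGradient

theorem Matrix.PosDef.isUnit_det_sqrt {n : Type*} [Fintype n] [DecidableEq n]
    {A : Matrix n n ℝ} (hA : A.PosDef) : IsUnit hA.posSemidef.sqrt.det := by
  unfold Matrix.PosSemidef.sqrt
  rw [det_mul, det_mul, det_diagonal, mul_comm, ← mul_assoc, ← det_mul,
    Unitary.star_mul_self_of_mem (Subtype.property _), det_one, one_mul]
  exact isUnit_iff_ne_zero.mpr (Finset.prod_ne_zero_iff.mpr fun i _ => by
    simpa using (Real.sqrt_pos.2 (hA.eigenvalues_pos i)).ne')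

section Jcost

attribute [local instance] Matrix.normedAddCommGroup Matrix.normedSpace

variable {nn mm pp : ℕ} {P11 : Matrix (Fin nn) (Fin nn) ℝ} {P12 : Matrix (Fin nn) (Fin mm) ℝ}
  {C : Matrix (Fin pp) (Fin nn) ℝ} {Msq Swsq : Matrix (Fin nn) (Fin nn) ℝ}
  {Rsq : Matrix (Fin mm) (Fin mm) ℝ} {Svsq : Matrix (Fin pp) (Fin pp) ℝ} {μ : Fin nn → ℝ}

theorem contDiffAt_Jcost {K : Matrix (Fin mm) (Fin pp) ℝ} (hK : IsNilpotent (K * (C * P12)))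
    {k : WithTop ℕ∞} : ContDiffAt ℝ k (Jcost P11 P12 C Msq Swsq Rsq Svsq μ) K := by
  have h₁ : (1 - P12 * K * C).det ≠ 0 := by
    have hKC : IsNilpotent (K * C * P12) := by rwa [Matrix.mul_assoc]
    rw [Matrix.mul_assoc]
    exact det_one_sub_ne_zero hKC.matrix_mul_comm
  have h₂ : (1 - C * P12 * K).det ≠ 0 := det_one_sub_ne_zero hK.matrix_mul_comm
  unfold Jcost
  fun_prop (disch := assumption)

theorem frobSq_le_Jcost (K : Matrix (Fin mm) (Fin pp) ℝ) :
    frobSq (Rsq * K * (1 - C * P12 * K)⁻¹ * Svsq) ≤ Jcost P11 P12 C Msq Swsq Rsq Svsq μ K := by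
  unfold Jcost
  refine le_add_of_le_of_nonneg (le_add_of_le_of_nonneg (le_add_of_nonneg_left ?_)
    (vecSq_nonneg _)) (vecSq_nonneg _)
  exact add_nonneg (add_nonneg (frobSq_nonneg _) (frobSq_nonneg _)) (frobSq_nonneg _)

theorem isCompact_Jcost_sublevel (hR : IsUnit Rsq.det) (hS : IsUnit Svsq.det)
    {𝒦 : Submodule ℝ (Matrix (Fin mm) (Fin pp) ℝ)}
    (hnilp : ∀ K ∈ 𝒦, IsNilpotent (K * (C * P12))) (c : ℝ) :
    IsCompact {K | K ∈ 𝒦 ∧ Jcost P11 P12 C Msq Swsq Rsq Svsq μ K ≤ c} := by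
  have hclosed : IsClosed {K | K ∈ 𝒦 ∧ Jcost P11 P12 C Msq Swsq Rsq Svsq μ K ≤ c} :=
    ContinuousOn.preimage_isClosed_of_isClosed
      (fun K hK => (contDiffAt_Jcost (hnilp K hK) (k := 0)).continuousAt.continuousWithinAt)
      𝒦.closed_of_finiteDimensional isClosed_Iic
  have hrecover : Continuous fun X : Matrix (Fin mm) (Fin pp) ℝ =>
      feedbackOfQ (C * P12) (Rsq⁻¹ * (X * Svsq⁻¹)) :=
    (continuous_feedbackOfQ _).comp
      (continuous_const.matrix_mul (continuous_id.matrix_mul continuous_const))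
  refine ((isCompact_closedBall 0 √c).image hrecover).of_isClosed_subset hclosed ?_
  rintro K ⟨hK, hJ⟩
  refine ⟨Rsq * K * (1 - C * P12 * K)⁻¹ * Svsq, ?_, ?_⟩
  · rw [mem_closedBall_zero_iff]
    exact norm_le_sqrt_of_frobSq_le ((frobSq_le_Jcost K).trans hJ)
  · dsimp only
    rw [mul_nonsing_inv_cancel_right _ _ hS, Matrix.mul_assoc,
      nonsing_inv_mul_cancel_left _ _ hR]
    exact feedbackOfQ_mul_inv_one_sub (hnilp K hK)

end Jcost

theorem projected_gradient_descent_US_general {n m p N : ℕ}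
    (P11 : Matrix (Fin (n * (N + 1))) (Fin (n * (N + 1))) ℝ)
    (P12 : Matrix (Fin (n * (N + 1))) (Fin (m * N)) ℝ)
    (C : Matrix (Fin (p * N)) (Fin (n * (N + 1))) ℝ)
    {M W : Matrix (Fin (n * (N + 1))) (Fin (n * (N + 1))) ℝ}
    {R : Matrix (Fin (m * N)) (Fin (m * N)) ℝ}
    {V : Matrix (Fin (p * N)) (Fin (p * N)) ℝ}
    (hM : M.PosSemidef) (hW : W.PosSemidef) (hR : R.PosDef) (hV : V.PosDef)
    (μ : Fin (n * (N + 1)) → ℝ)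
    (G : Matrix (Fin (p * N)) (Fin (m * N)) ℝ) (hG : G = C * P12)
    (𝒦 : Submodule ℝ (Matrix (Fin (m * N)) (Fin (p * N)) ℝ))
    (hnilp : ∀ K ∈ 𝒦, IsNilpotent (K * G))
    -- `proj` is the orthogonal projection onto `𝒦` w.r.t. the Frobenius inner product:
    (proj : Matrix (Fin (m * N)) (Fin (p * N)) ℝ →ₗ[ℝ] Matrix (Fin (m * N)) (Fin (p * N)) ℝ)
    (hprojmem : ∀ X, proj X ∈ 𝒦)
    (hprojorth : ∀ X, ∀ D ∈ 𝒦, ∑ i, ∑ j, (X - proj X) i j * D i j = 0)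
    -- unique stationarity: every stationary point of `J` on `𝒦` is a global minimizer
    (hUS : ∀ Kbar ∈ 𝒦,
      proj (gradJ P11 P12 C hM.sqrt hW.sqrt hR.posSemidef.sqrt hV.posSemidef.sqrt μ Kbar) = 0 →
      ∀ K ∈ 𝒦,
        Jcost P11 P12 C hM.sqrt hW.sqrt hR.posSemidef.sqrt hV.posSemidef.sqrt μ Kbar ≤
        Jcost P11 P12 C hM.sqrt hW.sqrt hR.posSemidef.sqrt hV.posSemidef.sqrt μ K)
    (K₀ : Matrix (Fin (m * N)) (Fin (p * N)) ℝ) (hK₀ : K₀ ∈ 𝒦) :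
    ∃ η : ℕ → ℝ, (∀ t, 0 < η t) ∧
      ∀ Kseq : ℕ → Matrix (Fin (m * N)) (Fin (p * N)) ℝ,
        Kseq 0 = K₀ →
        (∀ t, Kseq (t + 1) = Kseq t - η t •
          proj (gradJ P11 P12 C hM.sqrt hW.sqrt hR.posSemidef.sqrt hV.posSemidef.sqrt μ
            (Kseq t))) →
        (∀ t, Kseq t ∈ 𝒦) ∧
        Filter.Tendsto
          (fun t => Jcost P11 P12 C hM.sqrt hW.sqrt hR.posSemidef.sqrt hV.posSemidef.sqrt μ
            (Kseq t))
          Filter.atTop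
          (nhds (sInf ((fun K =>
            Jcost P11 P12 C hM.sqrt hW.sqrt hR.posSemidef.sqrt hV.posSemidef.sqrt μ K) ''
            (𝒦 : Set (Matrix (Fin (m * N)) (Fin (p * N)) ℝ))))) := by
  subst hG
  exact exists_projGrad_steps_tendsto_sInf proj hprojmem hprojorth
    (fun K hK => contDiffAt_Jcost (hnilp K hK))
    (isCompact_Jcost_sublevel hR.isUnit_det_sqrt hV.isUnit_det_sqrt hnilp _) hUS hK₀

/-- **projected gradient descent solves US problems globally.** Let `𝒦` be a
subspace with `K·G` nilpotent on `𝒦` (`G = C·P12`), let `Π_𝒦` be the orthogonal projection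
onto `𝒦` with respect to the Frobenius inner product, and suppose `min_{K ∈ 𝒦} J(K)` is
uniquely stationary (every stationary point is a global minimizer). Then for any `K₀ ∈ 𝒦`
there exist positive step sizes `η_t` such that the iterates
`K_{t+1} = K_t − η_t·Π_𝒦(∇J(K_t))` stay in `𝒦` and `J(K_t) → inf {J(K) : K ∈ 𝒦}`. -/
theorem projected_gradient_descent_US {n m p N : ℕ}
    (hn : 0 < n) (hm : 0 < m) (hp : 0 < p) (hN : 0 < N)
    (P11 : Matrix (Fin (n * (N + 1))) (Fin (n * (N + 1))) ℝ)
    (P12 : Matrix (Fin (n * (N + 1))) (Fin (m * N)) ℝ)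
    (C : Matrix (Fin (p * N)) (Fin (n * (N + 1))) ℝ)
    {M W : Matrix (Fin (n * (N + 1))) (Fin (n * (N + 1))) ℝ}
    {R : Matrix (Fin (m * N)) (Fin (m * N)) ℝ}
    {V : Matrix (Fin (p * N)) (Fin (p * N)) ℝ}
    (hM : M.PosSemidef) (hW : W.PosSemidef) (hR : R.PosDef) (hV : V.PosDef)
    (μ : Fin (n * (N + 1)) → ℝ)
    (G : Matrix (Fin (p * N)) (Fin (m * N)) ℝ) (hG : G = C * P12)
    (𝒦 : Submodule ℝ (Matrix (Fin (m * N)) (Fin (p * N)) ℝ))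
    (hnilp : ∀ K ∈ 𝒦, IsNilpotent (K * G))
    -- `proj` is the orthogonal projection onto `𝒦` w.r.t. the Frobenius inner product:
    (proj : Matrix (Fin (m * N)) (Fin (p * N)) ℝ →ₗ[ℝ] Matrix (Fin (m * N)) (Fin (p * N)) ℝ)
    (hprojmem : ∀ X, proj X ∈ 𝒦)
    (hprojfix : ∀ X ∈ 𝒦, proj X = X)
    (hprojorth : ∀ X, ∀ D ∈ 𝒦, ∑ i, ∑ j, (X - proj X) i j * D i j = 0)
    -- unique stationarity: every stationary point of `J` on `𝒦` is a global minimizer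
    (hUS : ∀ Kbar ∈ 𝒦,
      proj (gradJ P11 P12 C hM.sqrt hW.sqrt hR.posSemidef.sqrt hV.posSemidef.sqrt μ Kbar) = 0 →
      ∀ K ∈ 𝒦,
        Jcost P11 P12 C hM.sqrt hW.sqrt hR.posSemidef.sqrt hV.posSemidef.sqrt μ Kbar ≤
        Jcost P11 P12 C hM.sqrt hW.sqrt hR.posSemidef.sqrt hV.posSemidef.sqrt μ K)
    (K₀ : Matrix (Fin (m * N)) (Fin (p * N)) ℝ) (hK₀ : K₀ ∈ 𝒦) :
    ∃ η : ℕ → ℝ, (∀ t, 0 < η t) ∧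
      ∀ Kseq : ℕ → Matrix (Fin (m * N)) (Fin (p * N)) ℝ,
        Kseq 0 = K₀ →
        (∀ t, Kseq (t + 1) = Kseq t - η t •
          proj (gradJ P11 P12 C hM.sqrt hW.sqrt hR.posSemidef.sqrt hV.posSemidef.sqrt μ
            (Kseq t))) →
        (∀ t, Kseq t ∈ 𝒦) ∧
        Filter.Tendsto
          (fun t => Jcost P11 P12 C hM.sqrt hW.sqrt hR.posSemidef.sqrt hV.posSemidef.sqrt μ
            (Kseq t))
          Filter.atTop
          (nhds (sInf ((fun K =>
            Jcost P11 P12 C hM.sqrt hW.sqrt hR.posSemidef.sqrt hV.posSemidef.sqrt μ K) ''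
            (𝒦 : Set (Matrix (Fin (m * N)) (Fin (p * N)) ℝ))))) :=
  projected_gradient_descent_US_general P11 P12 C hM hW hR hV μ G hG 𝒦 hnilp proj hprojmem hprojorth
    hUS K₀ hK₀
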